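/- (Lemma 2, case k = 3) Let p be an odd prime, d ≥ 2 with d ∣ p−1, f = (p−1)/d. For every 0 ≤ ν ≤ d−1: n(3,ν) + f³ = p · Σ_{i=0}^{d−1} (ν,i)(i,θ) + f·δ_{θ0}·[n(1,ν) + f]. -/

import Mathlib

open Finset

/-- The Gauss period `η_i = Σ_{u=0}^{f-1} ζ^{ω^{du+i}}`. -/
noncomputable def gaussPeriod (p d f : ℕ) (ω : (ZMod p)ˣ) (ζ : ℂ) (i : ℕ) : ℂ :=
  ∑ u ∈ Finset.range f, ζ ^ (((ω : ZMod p) ^ (d * u + i)).val)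

/-- The cyclotomic number `(i,j)` of order `d`. -/
noncomputable def cycNum (p d f : ℕ) (ω : (ZMod p)ˣ) (i j : ℕ) : ℕ :=
  Nat.card {uv : ℕ × ℕ // uv.1 < f ∧ uv.2 < f ∧
    (1 : ZMod p) + (ω : ZMod p) ^ (d * uv.1 + i) = (ω : ZMod p) ^ (d * uv.2 + j)}

/-- The cyclotomic integer `n(k,ν) = Σ_{i=0}^{d-1} η_i^k · η_{i+ν}`. -/
noncomputable def nInt (p d f : ℕ) (ω : (ZMod p)ˣ) (ζ : ℂ) (k ν : ℕ) : ℂ :=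
  ∑ i ∈ Finset.range d, (gaussPeriod p d f ω ζ i) ^ k * gaussPeriod p d f ω ζ (i + ν)

/-- `θ = 0` if `f` is even, `θ = d/2` if `f` is odd. -/
def theta (d f : ℕ) : ℕ := if Even f then 0 else d / 2

/-- `N(k,a)`: the number of `k`-tuples of nonzero `d`-th powers summing to `a`. -/
noncomputable def waringCount (p d k : ℕ) (a : ZMod p) : ℕ :=
  Nat.card {t : Fin k → ZMod p //
    (∀ i, ∃ b : (ZMod p)ˣ, ((b : ZMod p)) ^ d = t i) ∧ ∑ i, t i = a}

/-- `s_d(p,a)`: the least `k ≥ 1` such that `a` is a sum of `k` nonzero `d`-th powers. -/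
noncomputable def sWaring (p d : ℕ) (a : ZMod p) : ℕ :=
  sInf {k | 1 ≤ k ∧ ∃ u : Fin k → (ZMod p)ˣ, a = ∑ i, ((u i : ZMod p)) ^ d}

/-- `g_d(p) = max_{a ∈ 𝔽_p^*} s_d(p,a)`. -/
noncomputable def gWaring (p d : ℕ) : ℕ :=
  sSup {s | ∃ a : (ZMod p)ˣ, s = sWaring p d (a : ZMod p)}

/-- Product of a chain of cyclotomic numbers `(a,x₁)(x₁,x₂)⋯(xₘ,b)`. -/
noncomputable def chainProd (c : ℕ → ℕ → ℕ) (a b : ℕ) : List ℕ → ℕ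
  | [] => c a b
  | x :: xs => c a x * chainProd c x b xs

/-- Sum over all chains of `m` intermediate indices `0 ≤ i < d` of the products
`(a,i₂)(i₂,i₃)⋯(i_{m+1},b)` of consecutive cyclotomic numbers. -/
noncomputable def chainSum (d : ℕ) (c : ℕ → ℕ → ℕ) (a b m : ℕ) : ℕ :=
  ∑ v : Fin m → Fin d, chainProd c a b (List.ofFn fun i => ((v i : ℕ)))

/-!
With `ψ x = ζ ^ x`, shifting the summation index of the second factor gives
`η_i η_{i+ν} = Σ_{w<f} Σ_{u<f} ψ(ω^{du+i} (1 + ω^{dw+ν}))`. The inner sum is `η_{i+j}` when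
`1 + ω^{dw+ν}` lies in the class `ω^j 𝔽_p^{*d}`, which happens for `(ν,j)` values of `w`, and it is
`f` when `ω^{dw+ν} = -1 = ω^{d⌊f/2⌋+θ}`, which happens once if `ν = θ` and never otherwise. Hence
`η_i η_{i+ν} = Σ_j (ν,j) η_{i+j} + f δ_{νθ}`, and multiplying by `η_i^k` and summing over `i`,
`n(k+1,ν) = f δ_{νθ} Σ_i η_i^k + Σ_j (ν,j) n(k,j)`. Starting from `n(0,ν) = Σ_i η_i = -1` and the
row sums `Σ_j (ν,j) = f - δ_{νθ}` (the same count with every inner sum replaced by `1`), three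
steps give `n(1,ν) = p δ_{νθ} - f`, `n(2,ν) = p (ν,θ) - f²` and the formula for `n(3,ν)`, using
`Σ_i η_i² = n(1,0)`.
-/

theorem Function.Periodic.sum_range_add {M : Type*} [AddCancelCommMonoid M] {h : ℕ → M} {n : ℕ}
    (hh : Function.Periodic h n) (t : ℕ) :
    ∑ u ∈ range n, h (u + t) = ∑ u ∈ range n, h u := by
  induction t generalizing h with
  | zero => rfl
  | succ t ih =>
    have hshift : ∑ u ∈ range n, h (u + 1) = ∑ u ∈ range n, h u := by
      have h1 := sum_range_succ' h n
      rw [sum_range_succ, show h n = h 0 by simpa using hh 0] at h1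
      exact add_right_cancel h1.symm
    exact (ih (h := fun u => h (u + 1))
      fun x => by simpa only [add_right_comm x n 1] using hh _).trans hshift

theorem IsPrimitiveRoot.pow_eq_neg_one_of_two_mul {R : Type*} [CommRing R] [IsDomain R] {x : R}
    {m : ℕ} (hx : IsPrimitiveRoot x (2 * m)) (hm : m ≠ 0) : x ^ m = -1 := by
  have h2 := hx.pow_of_dvd hm (dvd_mul_left m 2)
  rw [Nat.mul_div_cancel _ (Nat.pos_of_ne_zero hm)] at h2
  exact h2.eq_neg_one_of_two_right

section PowMulAdd

variable {M : Type*} [Monoid M] {x : M} {d f : ℕ}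

theorem pow_mul_add_eq_pow_mul_add_iff (hx : orderOf x = d * f) {v v' j j' : ℕ}
    (hv : v < f) (hv' : v' < f) (hj : j < d) (hj' : j' < d) :
    x ^ (d * v + j) = x ^ (d * v' + j') ↔ v = v' ∧ j = j' := by
  have hlt : ∀ {v j}, v < f → j < d → d * v + j < orderOf x := fun hv hj => by
    rw [hx]; nlinarith
  refine ⟨fun h => ?_, by rintro ⟨rfl, rfl⟩; rfl⟩
  have h' : d * v + j = d * v' + j' := pow_injOn_Iio_orderOf (hlt hv hj) (hlt hv' hj') h
  have hjj : j = j' := by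
    simpa [Nat.mul_add_mod, Nat.mod_eq_of_lt hj, Nat.mod_eq_of_lt hj'] using congrArg (· % d) h'
  subst hjj
  exact ⟨Nat.eq_of_mul_eq_mul_left (by omega) (Nat.add_right_cancel h'), rfl⟩

theorem exists_pow_mul_add_eq (hx : orderOf x = d * f) (hd : 0 < d) (hf : 0 < f) (n : ℕ) :
    ∃ v < f, ∃ j < d, x ^ (d * v + j) = x ^ n := by
  refine ⟨n % (d * f) / d, Nat.div_lt_of_lt_mul (Nat.mod_lt _ (by positivity)),
    n % (d * f) % d, Nat.mod_lt _ hd, ?_⟩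
  rw [Nat.div_add_mod, ← hx, pow_mod_orderOf]

theorem sum_range_pow_mul_add_shift {N : Type*} [AddCancelCommMonoid N] (hx : x ^ (d * f) = 1)
    (g : M → N) (j t : ℕ) :
    ∑ u ∈ range f, g (x ^ (d * (u + t) + j)) = ∑ u ∈ range f, g (x ^ (d * u + j)) :=
  Function.Periodic.sum_range_add (h := fun u => g (x ^ (d * u + j)))
    (fun u => by simp only [mul_add, add_right_comm _ (d * f), pow_add x _ (d * f), hx, mul_one]) t

end PowMulAdd

theorem theta_lt {d : ℕ} (f : ℕ) (hd : 0 < d) : theta d f < d := by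
  unfold theta; split_ifs <;> omega

theorem mul_div_two_add_theta (d f : ℕ) : d * (f / 2) + theta d f = d * f / 2 := by
  rcases Nat.even_or_odd' f with ⟨a, rfl | rfl⟩
  · simp [theta, mul_left_comm d 2 a]
  · rw [theta, if_neg (by simp [parity_simps]), show (2 * a + 1) / 2 = a by omega, mul_add,
      mul_one, mul_left_comm, Nat.mul_add_div two_pos]

theorem cycNum_eq_sum (p d f : ℕ) (ω : (ZMod p)ˣ) (a b : ℕ) :
    cycNum p d f ω a b = ∑ w ∈ range f, ∑ v ∈ range f,
      if 1 + (ω : ZMod p) ^ (d * w + a) = (ω : ZMod p) ^ (d * v + b) then 1 else 0 := by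
  classical
  rw [cycNum, ← sum_product', ← card_filter, ← Nat.card_eq_finsetCard]
  exact Nat.card_congr <| Equiv.subtypeEquivRight fun uv => by
    simp only [mem_filter, mem_product, mem_range, and_assoc]

section Cyclotomy

variable {p d f : ℕ} [Fact p.Prime] {ω : (ZMod p)ˣ}

theorem pos_of_mul_eq_sub_one (hdf : d * f = p - 1) : 0 < d ∧ 0 < f :=
  CanonicallyOrderedAdd.mul_pos.mp (hdf ▸ Nat.sub_pos_of_lt (Fact.out : p.Prime).one_lt)

theorem orderOf_coe_eq (hω : ∀ x : (ZMod p)ˣ, ∃ n : ℕ, ω ^ n = x) (hdf : d * f = p - 1) :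
    orderOf (ω : ZMod p) = d * f := by
  rw [orderOf_units, hdf, ← ZMod.card_units p, ← Nat.card_eq_fintype_card]
  refine orderOf_eq_card_of_forall_mem_zpowers fun x => ?_
  obtain ⟨n, rfl⟩ := hω x
  exact ⟨n, zpow_natCast ω n⟩

theorem exists_pow_mul_add_eq_of_ne_zero (hω : ∀ x : (ZMod p)ˣ, ∃ n : ℕ, ω ^ n = x)
    (hdf : d * f = p - 1) {c : ZMod p} (hc : c ≠ 0) :
    ∃ v < f, ∃ j < d, (ω : ZMod p) ^ (d * v + j) = c := by
  obtain ⟨hd, hf⟩ := pos_of_mul_eq_sub_one hdf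
  obtain ⟨n, hn⟩ := hω (Units.mk0 c hc)
  obtain ⟨v, hv, j, hj, h⟩ := exists_pow_mul_add_eq (orderOf_coe_eq hω hdf) hd hf n
  exact ⟨v, hv, j, hj, by rw [h, ← Units.val_pow_eq_pow_val, hn, Units.val_mk0]⟩

theorem sum_range_sum_range_ite_eq (hω : ∀ x : (ZMod p)ˣ, ∃ n : ℕ, ω ^ n = x)
    (hdf : d * f = p - 1) {c : ZMod p} (hc : c ≠ 0) {M : Type*} [AddCommMonoid M]
    {G : ZMod p → M} {F : ℕ → ℕ → M}
    (hG : ∀ j < d, ∀ v < f, G ((ω : ZMod p) ^ (d * v + j)) = F j v) :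
    ∑ j ∈ range d, ∑ v ∈ range f, (if c = (ω : ZMod p) ^ (d * v + j) then F j v else 0) = G c := by
  obtain ⟨v₀, hv₀, j₀, hj₀, rfl⟩ := exists_pow_mul_add_eq_of_ne_zero hω hdf hc
  rw [← sum_product' (f := fun j v => if _ = (ω : ZMod p) ^ (d * v + j) then F j v else 0),
    sum_congr rfl (g := fun jv => if (j₀, v₀) = jv then F jv.1 jv.2 else 0), sum_ite_eq,
    if_pos (by simp [hj₀, hv₀]), hG j₀ hj₀ v₀ hv₀]
  rintro ⟨j, v⟩ hjv
  simp only [mem_product, mem_range] at hjv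
  simp only [pow_mul_add_eq_pow_mul_add_iff (orderOf_coe_eq hω hdf) hv₀ hjv.2 hj₀ hjv.1,
    Prod.ext_iff, and_comm]

theorem sum_range_sum_range_pow_mul_add (hω : ∀ x : (ZMod p)ˣ, ∃ n : ℕ, ω ^ n = x)
    (hdf : d * f = p - 1) {M : Type*} [AddCommGroup M] (g : ZMod p → M) :
    ∑ j ∈ range d, ∑ v ∈ range f, g ((ω : ZMod p) ^ (d * v + j)) = ∑ c, g c - g 0 := by
  rw [← sum_erase_eq_sub (f := g) (mem_univ 0)]
  calc ∑ j ∈ range d, ∑ v ∈ range f, g ((ω : ZMod p) ^ (d * v + j))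
      = ∑ j ∈ range d, ∑ v ∈ range f, ∑ c ∈ univ.erase 0,
          if c = (ω : ZMod p) ^ (d * v + j) then g ((ω : ZMod p) ^ (d * v + j)) else 0 := by
        refine sum_congr rfl fun j _ => sum_congr rfl fun v _ => ?_
        rw [sum_ite_eq', if_pos (mem_erase.mpr ⟨pow_ne_zero _ ω.ne_zero, mem_univ _⟩)]
    _ = ∑ c ∈ univ.erase 0, ∑ j ∈ range d, ∑ v ∈ range f,
          if c = (ω : ZMod p) ^ (d * v + j) then g ((ω : ZMod p) ^ (d * v + j)) else 0 := by
        rw [sum_congr rfl fun j _ => sum_comm, sum_comm]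
    _ = ∑ c ∈ univ.erase 0, g c :=
        sum_congr rfl fun c hc => sum_range_sum_range_ite_eq hω hdf (ne_of_mem_erase hc)
          fun _ _ _ _ => rfl

theorem one_add_pow_mul_add_eq_zero_iff (hodd : Odd p) (hω : ∀ x : (ZMod p)ˣ, ∃ n : ℕ, ω ^ n = x)
    (hdf : d * f = p - 1) {ν w : ℕ} (hν : ν < d) (hw : w < f) :
    1 + (ω : ZMod p) ^ (d * w + ν) = 0 ↔ ν = theta d f ∧ w = f / 2 := by
  obtain ⟨hd, hf⟩ := pos_of_mul_eq_sub_one hdf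
  have horder := orderOf_coe_eq hω hdf
  have hneg : (ω : ZMod p) ^ (d * (f / 2) + theta d f) = -1 := by
    obtain ⟨m, hm⟩ : Even (d * f) := by rw [hdf]; exact Nat.Odd.sub_odd hodd odd_one
    rw [mul_div_two_add_theta, hm, ← two_mul, Nat.mul_div_cancel_left _ two_pos]
    refine IsPrimitiveRoot.pow_eq_neg_one_of_two_mul ?_ (by have := Nat.mul_pos hd hf; omega)
    rw [two_mul, ← hm, ← horder]
    exact IsPrimitiveRoot.orderOf _
  rw [add_comm, ← eq_neg_iff_add_eq_zero, ← hneg, pow_mul_add_eq_pow_mul_add_iff horder hw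
    (Nat.div_lt_self hf one_lt_two) hν (theta_lt f hd), and_comm]

theorem sum_range_ite_one_add_pow_eq_zero (hodd : Odd p)
    (hω : ∀ x : (ZMod p)ˣ, ∃ n : ℕ, ω ^ n = x) (hdf : d * f = p - 1) {ν : ℕ} (hν : ν < d)
    {M : Type*} [AddCommMonoid M] (a : M) :
    ∑ w ∈ range f, (if 1 + (ω : ZMod p) ^ (d * w + ν) = 0 then a else 0)
      = if ν = theta d f then a else 0 := by
  rw [sum_congr rfl fun w hw =>
    if_congr (one_add_pow_mul_add_eq_zero_iff hodd hω hdf hν (mem_range.mp hw)) rfl rfl]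
  by_cases h : ν = theta d f
  · simp [h, sum_ite_eq', Nat.div_lt_self (pos_of_mul_eq_sub_one hdf).2 one_lt_two]
  · simp [h]

theorem sum_range_one_add_pow (hodd : Odd p) (hω : ∀ x : (ZMod p)ˣ, ∃ n : ℕ, ω ^ n = x)
    (hdf : d * f = p - 1) {ν : ℕ} (hν : ν < d) {R : Type*} [CommSemiring R]
    {G : ZMod p → R} {F : ℕ → R} (hG : ∀ j < d, ∀ v < f, G ((ω : ZMod p) ^ (d * v + j)) = F j) :
    ∑ w ∈ range f, G (1 + (ω : ZMod p) ^ (d * w + ν))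
      = (if ν = theta d f then G 0 else 0)
        + ∑ j ∈ range d, (cycNum p d f ω ν j : R) * F j := by
  have hsplit : ∀ w, G (1 + (ω : ZMod p) ^ (d * w + ν))
      = (if 1 + (ω : ZMod p) ^ (d * w + ν) = 0 then G 0 else 0)
        + ∑ j ∈ range d, ∑ v ∈ range f,
            if 1 + (ω : ZMod p) ^ (d * w + ν) = (ω : ZMod p) ^ (d * v + j) then F j else 0 := by
    intro w
    by_cases hc : 1 + (ω : ZMod p) ^ (d * w + ν) = 0
    · rw [if_pos hc, hc, sum_eq_zero fun j _ => sum_eq_zero fun v _ =>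
        if_neg (pow_ne_zero _ ω.ne_zero).symm, add_zero]
    · rw [if_neg hc, zero_add, sum_range_sum_range_ite_eq hω hdf hc (F := fun j _ => F j) hG]
  rw [sum_congr rfl fun w _ => hsplit w, sum_add_distrib,
    sum_range_ite_one_add_pow_eq_zero hodd hω hdf hν, sum_comm]
  simp only [cycNum_eq_sum, Nat.cast_sum, Nat.cast_ite, Nat.cast_one, Nat.cast_zero, sum_mul,
    ite_mul, one_mul, zero_mul]

theorem ite_add_sum_cycNum (hodd : Odd p) (hω : ∀ x : (ZMod p)ˣ, ∃ n : ℕ, ω ^ n = x)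
    (hdf : d * f = p - 1) {ν : ℕ} (hν : ν < d) (R : Type*) [CommSemiring R] :
    (if ν = theta d f then 1 else 0) + ∑ j ∈ range d, (cycNum p d f ω ν j : R) = f := by
  simpa using (sum_range_one_add_pow hodd hω hdf hν (G := fun _ => (1 : R)) (F := fun _ => 1)
    fun _ _ _ _ => rfl).symm

end Cyclotomy

section GaussPeriods

variable {p d f : ℕ} [Fact p.Prime] {ω : (ZMod p)ˣ} {ζ : ℂ}

theorem gaussPeriod_eq_sum_zmodChar (hζ : ζ ^ p = 1) (i : ℕ) :
    gaussPeriod p d f ω ζ i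
      = ∑ u ∈ range f, AddChar.zmodChar p hζ ((ω : ZMod p) ^ (d * u + i)) :=
  rfl

theorem gaussPeriod_periodic (hω : ∀ x : (ZMod p)ˣ, ∃ n : ℕ, ω ^ n = x) (hdf : d * f = p - 1) :
    Function.Periodic (gaussPeriod p d f ω ζ) d := fun i => by
  have hα : (ω : ZMod p) ^ (d * f) = 1 := orderOf_coe_eq hω hdf ▸ pow_orderOf_eq_one _
  rw [gaussPeriod, gaussPeriod,
    ← sum_range_pow_mul_add_shift hα (fun x : ZMod p => ζ ^ x.val) i 1]
  simp only [mul_add, mul_one, add_assoc, add_comm d i]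

theorem sum_range_gaussPeriod_add (hω : ∀ x : (ZMod p)ˣ, ∃ n : ℕ, ω ^ n = x)
    (hdf : d * f = p - 1) (hζ : IsPrimitiveRoot ζ p) (j : ℕ) :
    ∑ i ∈ range d, gaussPeriod p d f ω ζ (i + j) = -1 := by
  have hψ : AddChar.zmodChar p hζ.pow_eq_one ≠ 1 := by
    rw [AddChar.zmod_char_ne_one_iff, AddChar.zmodChar_apply, ZMod.val_one, pow_one]
    exact hζ.ne_one (Fact.out : p.Prime).one_lt
  rw [(gaussPeriod_periodic hω hdf).sum_range_add]
  simp only [gaussPeriod_eq_sum_zmodChar hζ.pow_eq_one]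
  rw [sum_range_sum_range_pow_mul_add hω hdf, AddChar.sum_eq_zero_of_ne_one hψ,
    AddChar.map_zero_eq_one, zero_sub]

theorem gaussPeriod_mul_gaussPeriod_add (hodd : Odd p)
    (hω : ∀ x : (ZMod p)ˣ, ∃ n : ℕ, ω ^ n = x) (hdf : d * f = p - 1) (hζ : ζ ^ p = 1)
    (i : ℕ) {ν : ℕ} (hν : ν < d) :
    gaussPeriod p d f ω ζ i * gaussPeriod p d f ω ζ (i + ν)
      = f * (if ν = theta d f then 1 else 0)
        + ∑ j ∈ range d, (cycNum p d f ω ν j : ℂ) * gaussPeriod p d f ω ζ (i + j) := by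
  have hα : (ω : ZMod p) ^ (d * f) = 1 := orderOf_coe_eq hω hdf ▸ pow_orderOf_eq_one _
  have hpow : ∀ u w j, (ω : ZMod p) ^ (d * u + i) * (ω : ZMod p) ^ (d * w + j)
      = (ω : ZMod p) ^ (d * (u + w) + (i + j)) := by
    intro u w j; rw [← pow_add]; ring_nf
  calc gaussPeriod p d f ω ζ i * gaussPeriod p d f ω ζ (i + ν)
      = ∑ u ∈ range f, ∑ w ∈ range f, AddChar.zmodChar p hζ ((ω : ZMod p) ^ (d * u + i))
          * AddChar.zmodChar p hζ ((ω : ZMod p) ^ (d * w + (i + ν))) := by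
        rw [gaussPeriod_eq_sum_zmodChar hζ, gaussPeriod_eq_sum_zmodChar hζ, sum_mul_sum]
    _ = ∑ u ∈ range f, ∑ w ∈ range f, AddChar.zmodChar p hζ
          ((ω : ZMod p) ^ (d * u + i) * (1 + (ω : ZMod p) ^ (d * w + ν))) := by
        refine sum_congr rfl fun u _ => (sum_range_pow_mul_add_shift hα
          (fun x => AddChar.zmodChar p hζ ((ω : ZMod p) ^ (d * u + i)) * AddChar.zmodChar p hζ x)
          (i + ν) u).symm.trans (sum_congr rfl fun w _ => ?_)
        rw [mul_one_add, hpow, AddChar.map_add_eq_mul, add_comm u w]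
    _ = _ := by
        refine sum_comm.trans ((sum_range_one_add_pow hodd hω hdf hν
          (G := fun c => ∑ u ∈ range f, AddChar.zmodChar p hζ ((ω : ZMod p) ^ (d * u + i) * c))
          (F := fun j => gaussPeriod p d f ω ζ (i + j)) fun j _ v _ => ?_).trans ?_)
        · simp only [hpow, sum_range_pow_mul_add_shift hα, gaussPeriod_eq_sum_zmodChar hζ]
        · simp

theorem nInt_succ (hodd : Odd p) (hω : ∀ x : (ZMod p)ˣ, ∃ n : ℕ, ω ^ n = x)
    (hdf : d * f = p - 1) (hζ : ζ ^ p = 1) (k : ℕ) {ν : ℕ} (hν : ν < d) :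
    nInt p d f ω ζ (k + 1) ν
      = f * (if ν = theta d f then 1 else 0) * ∑ i ∈ range d, gaussPeriod p d f ω ζ i ^ k
        + ∑ j ∈ range d, (cycNum p d f ω ν j : ℂ) * nInt p d f ω ζ k j := by
  simp only [nInt, pow_succ, mul_assoc, gaussPeriod_mul_gaussPeriod_add hodd hω hdf hζ _ hν,
    mul_add, sum_add_distrib, mul_sum]
  rw [sum_comm (s := range d) (t := range d)]
  congr 1 <;> refine sum_congr rfl fun _ _ => ?_
  · ring
  · exact sum_congr rfl fun _ _ => by ring

theorem nInt_zero (hω : ∀ x : (ZMod p)ˣ, ∃ n : ℕ, ω ^ n = x) (hdf : d * f = p - 1)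
    (hζ : IsPrimitiveRoot ζ p) (j : ℕ) : nInt p d f ω ζ 0 j = -1 := by
  simp only [nInt, pow_zero, one_mul, sum_range_gaussPeriod_add hω hdf hζ]

theorem nInt_one (hodd : Odd p) (hω : ∀ x : (ZMod p)ˣ, ∃ n : ℕ, ω ^ n = x)
    (hdf : d * f = p - 1) (hζ : IsPrimitiveRoot ζ p) {ν : ℕ} (hν : ν < d) :
    nInt p d f ω ζ 1 ν = p * (if ν = theta d f then 1 else 0) - f := by
  have hp : (d * f : ℂ) = p - 1 := by
    rw [← Nat.cast_mul, hdf, Nat.cast_sub (Fact.out : p.Prime).one_lt.le, Nat.cast_one]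
  rw [nInt_succ hodd hω hdf hζ.pow_eq_one 0 hν]
  simp only [nInt_zero hω hdf hζ, pow_zero, sum_const, card_range, nsmul_eq_mul, mul_one,
    mul_neg, sum_neg_distrib]
  linear_combination (if ν = theta d f then (1 : ℂ) else 0) * hp
    - ite_add_sum_cycNum hodd hω hdf hν ℂ

theorem nInt_two (hodd : Odd p) (hω : ∀ x : (ZMod p)ˣ, ∃ n : ℕ, ω ^ n = x)
    (hdf : d * f = p - 1) (hζ : IsPrimitiveRoot ζ p) {ν : ℕ} (hν : ν < d) :
    nInt p d f ω ζ 2 ν = p * cycNum p d f ω ν (theta d f) - f ^ 2 := by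
  have hθ : theta d f ∈ range d := mem_range.mpr (theta_lt f (pos_of_mul_eq_sub_one hdf).1)
  have hn1 : ∀ j ∈ range d, (cycNum p d f ω ν j : ℂ) * nInt p d f ω ζ 1 j
      = p * (if j = theta d f then (cycNum p d f ω ν j : ℂ) else 0)
        - f * cycNum p d f ω ν j := fun j hj => by
    rw [nInt_one hodd hω hdf hζ (mem_range.mp hj)]; split_ifs <;> ring
  have hsum : ∑ i ∈ range d, gaussPeriod p d f ω ζ i = -1 := by
    simpa using sum_range_gaussPeriod_add hω hdf hζ 0
  rw [nInt_succ hodd hω hdf hζ.pow_eq_one 1 hν, sum_congr rfl hn1, sum_sub_distrib, ← mul_sum,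
    ← mul_sum, sum_ite_eq' _ _ _, if_pos hθ]
  simp only [pow_one, hsum]
  linear_combination -(f : ℂ) * ite_add_sum_cycNum hodd hω hdf hν ℂ

end GaussPeriods

theorem nInt_three_general (p d f : ℕ) (hp : p.Prime) (hodd : Odd p)
    (hdvd : d ∣ p - 1) (hf : f = (p - 1) / d)
    (ω : (ZMod p)ˣ) (hω : ∀ x : (ZMod p)ˣ, ∃ n : ℕ, ω ^ n = x)
    (ζ : ℂ) (hζ : IsPrimitiveRoot ζ p)
    (ν : ℕ) (hν : ν < d) :
    nInt p d f ω ζ 3 ν + (f : ℂ) ^ 3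
      = (p : ℂ) * ∑ i ∈ Finset.range d,
          (cycNum p d f ω ν i : ℂ) * (cycNum p d f ω i (theta d f) : ℂ)
        + (f : ℂ) * (if theta d f = 0 then 1 else 0) * (nInt p d f ω ζ 1 ν + (f : ℂ)) := by
  have : Fact p.Prime := ⟨hp⟩
  have hdf : d * f = p - 1 := by rw [hf, Nat.mul_div_cancel' hdvd]
  have hsq : ∑ i ∈ range d, gaussPeriod p d f ω ζ i ^ 2 = nInt p d f ω ζ 1 0 := by
    simp [nInt, sq]
  have hn2 : ∀ j ∈ range d, (cycNum p d f ω ν j : ℂ) * nInt p d f ω ζ 2 j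
      = p * (cycNum p d f ω ν j * cycNum p d f ω j (theta d f)) - f ^ 2 * cycNum p d f ω ν j :=
    fun j hj => by rw [nInt_two hodd hω hdf hζ (mem_range.mp hj)]; ring
  rw [nInt_succ hodd hω hdf hζ.pow_eq_one 2 hν, hsq, sum_congr rfl hn2, sum_sub_distrib,
    ← mul_sum, ← mul_sum, nInt_one hodd hω hdf hζ hν,
    nInt_one hodd hω hdf hζ (pos_of_mul_eq_sub_one hdf).1]
  simp only [eq_comm (a := 0)]
  linear_combination -(f : ℂ) ^ 2 * ite_add_sum_cycNum hodd hω hdf hν ℂ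

/-- Lemma 2, case k = 3:
`n(3,ν) + f³ = p·Σ_{i=0}^{d-1}(ν,i)(i,θ) + f·δ_{θ0}·[n(1,ν) + f]`. -/
theorem nInt_three (p d f : ℕ) (hp : p.Prime) (hodd : Odd p)
    (hd : 2 ≤ d) (hdvd : d ∣ p - 1) (hf : f = (p - 1) / d)
    (ω : (ZMod p)ˣ) (hω : ∀ x : (ZMod p)ˣ, ∃ n : ℕ, ω ^ n = x)
    (ζ : ℂ) (hζ : IsPrimitiveRoot ζ p)
    (ν : ℕ) (hν : ν < d) :
    nInt p d f ω ζ 3 ν + (f : ℂ) ^ 3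
      = (p : ℂ) * ∑ i ∈ Finset.range d,
          (cycNum p d f ω ν i : ℂ) * (cycNum p d f ω i (theta d f) : ℂ)
        + (f : ℂ) * (if theta d f = 0 then 1 else 0) * (nInt p d f ω ζ 1 ν + (f : ℂ)) :=
  nInt_three_general p d f hp hodd hdvd hf ω hω ζ hζ ν hν
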